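/- arXiv:2308.05053 — 2 statements merged into one kernel-verified Lean document; each statement's English description precedes it below -/
import Mathlib

section
/- Fix n ∈ ℕ. Let v₁, …, v_s ∈ ℤⁿ be ℝ-linearly independent, let W ⊆ ℂⁿ be a complex vector subspace, and let ℓ ∈ {1, …, s} with v_ℓ ∈ W. Assume the cone σ^ℓ := Cone(vᵢ : i ≠ ℓ) satisfies the implication [Relint(σ^ℓ) ∩ W ∩ ℤⁿ ≠ ∅ ⟹ σ^ℓ ⊆ W]. Then the cone σ := Cone(v₁, …, v_s) satisfies the implication [Relint(σ) ∩ W ∩ ℤⁿ ≠ ∅ ⟹ σ ⊆ W]. -/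
open scoped BigOperators

noncomputable section

/-- Image of an integer vector in `ℝⁿ`. -/
def intToR {n : ℕ} (m : Fin n → ℤ) : Fin n → ℝ := fun i => (m i : ℝ)

/-- Image of an integer vector in `ℂⁿ`. -/
def intToC {n : ℕ} (m : Fin n → ℤ) : Fin n → ℂ := fun i => (m i : ℂ)

/-- Image of a real vector in `ℂⁿ`. -/
def toC {n : ℕ} (x : Fin n → ℝ) : Fin n → ℂ := fun i => (x i : ℂ)

/-- The cone `Cone(v₁, …, v_k) = {∑ cᵢ vᵢ : cᵢ ≥ 0} ⊆ ℝⁿ`. -/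
def coneOf {n k : ℕ} (v : Fin k → (Fin n → ℝ)) : Set (Fin n → ℝ) :=
  {x | ∃ c : Fin k → ℝ, (∀ i, 0 ≤ c i) ∧ x = ∑ i, c i • v i}

/-- The cone generated by the vectors `vⱼ` for `j` in a subset `J` of the index set. -/
def coneOfSub {n k : ℕ} (v : Fin k → (Fin n → ℝ)) (J : Set (Fin k)) : Set (Fin n → ℝ) :=
  {x | ∃ c : Fin k → ℝ, (∀ i, 0 ≤ c i) ∧ (∀ i, i ∉ J → c i = 0) ∧ x = ∑ i, c i • v i}

/-- `σ ⊆ W`: every point of `σ ⊆ ℝⁿ` lies (after complexification) in the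
complex subspace `W ⊆ ℂⁿ`. -/
def subsetW {n : ℕ} (σ : Set (Fin n → ℝ)) (W : Submodule ℂ (Fin n → ℂ)) : Prop :=
  ∀ x ∈ σ, toC x ∈ W

/-- `Relint(σ) ∩ W ∩ ℤⁿ ≠ ∅`: there is a lattice point in the relative interior of `σ`
lying in `W`.  The relative interior is the intrinsic interior (interior within the
affine span). -/
def relintMeetsLattice {n : ℕ} (σ : Set (Fin n → ℝ)) (W : Submodule ℂ (Fin n → ℂ)) : Prop :=
  ∃ m : Fin n → ℤ, intToR m ∈ intrinsicInterior ℝ σ ∧ intToC m ∈ W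

/-- `τ` is a face of `σ`: `τ = σ ∩ {f = 0}` for an `ℝ`-linear functional `f`
nonnegative on `σ`. -/
def IsFaceOf {n : ℕ} (τ σ : Set (Fin n → ℝ)) : Prop :=
  ∃ f : (Fin n → ℝ) →ₗ[ℝ] ℝ, (∀ x ∈ σ, 0 ≤ f x) ∧ τ = σ ∩ {x | f x = 0}

variable {n k : ℕ}

/-- coefficients are unique for linearly independent families -/
lemma coeff_unique {w : Fin k → (Fin n → ℝ)} (hw : LinearIndependent ℝ w)
    {a b : Fin k → ℝ} (h : ∑ i, a i • w i = ∑ i, b i • w i) : a = b := by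
  have h2 : ∑ i, (a - b) i • w i = 0 := by
    simp only [Pi.sub_apply, sub_smul, Finset.sum_sub_distrib, h, sub_self]
  funext i
  have := Fintype.linearIndependent_iff.mp hw (a - b) h2 i
  simpa [sub_eq_zero] using this

/-- a dual family to a linearly independent family -/
lemma exists_dual {w : Fin k → (Fin n → ℝ)} (hw : LinearIndependent ℝ w) :
    ∃ f : Fin k → ((Fin n → ℝ) →ₗ[ℝ] ℝ), ∀ i j, f i (w j) = if i = j then 1 else 0 := by
  classical
  have hs : LinearIndepOn ℝ id (Set.range w) :=
    (linearIndepOn_id_range_iff hw.injective).mpr hw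
  let B := Module.Basis.extend hs
  have hmem : ∀ i : Fin k, w i ∈ hs.extend (Set.subset_univ _) := fun i =>
    hs.subset_extend _ ⟨i, rfl⟩
  refine ⟨fun i => (B.coord ⟨w i, hmem i⟩).comp (LinearMap.id), fun i j => ?_⟩
  have hBj : B ⟨w j, hmem j⟩ = w j := Module.Basis.extend_apply_self hs _
  have : (B.coord ⟨w i, hmem i⟩) (B ⟨w j, hmem j⟩) =
      if (⟨w i, hmem i⟩ : hs.extend (Set.subset_univ _)) = ⟨w j, hmem j⟩ then 1 else 0 := by
    rw [Module.Basis.coord_apply, Module.Basis.repr_self]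
    simp [Finsupp.single_apply, eq_comm]
  rw [LinearMap.comp_apply, LinearMap.id_apply, ← hBj, this]
  congr 1
  simp only [Subtype.mk.injEq, eq_iff_iff]
  constructor
  · intro h; exact hw.injective h ▸ rfl
  · intro h; rw [h]

lemma mem_span_iff (w : Fin k → (Fin n → ℝ)) (J : Set (Fin k)) (y : Fin n → ℝ) :
    y ∈ Submodule.span ℝ (w '' J) ↔
      ∃ c : Fin k → ℝ, (∀ i, i ∉ J → c i = 0) ∧ y = ∑ i, c i • w i := by
  classical
  constructor
  · intro hy
    induction hy using Submodule.span_induction with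
    | mem x hx =>
      obtain ⟨j, hj, rfl⟩ := hx
      exact ⟨Pi.single j 1, fun i hi => by
        by_cases h : i = j
        · exact absurd (h ▸ hj) hi
        · simp [Pi.single_apply, h], by simp [Pi.single_apply]⟩
    | zero => exact ⟨0, fun i _ => rfl, by simp⟩
    | add x y hx hy ihx ihy =>
      obtain ⟨c, hc0, rfl⟩ := ihx
      obtain ⟨d, hd0, rfl⟩ := ihy
      exact ⟨c + d, fun i hi => by simp [hc0 i hi, hd0 i hi], by
        simp [add_smul, Finset.sum_add_distrib]⟩
    | smul a x hx ihx =>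
      obtain ⟨c, hc0, rfl⟩ := ihx
      exact ⟨a • c, fun i hi => by simp [hc0 i hi], by
        simp [Finset.smul_sum, smul_smul]⟩
  · rintro ⟨c, hc0, rfl⟩
    refine Submodule.sum_mem _ fun i _ => ?_
    by_cases h : i ∈ J
    · exact Submodule.smul_mem _ _ (Submodule.subset_span ⟨i, h, rfl⟩)
    · simp [hc0 i h]


lemma zero_mem_coneOfSub (w : Fin k → (Fin n → ℝ)) (J : Set (Fin k)) :
    (0 : Fin n → ℝ) ∈ coneOfSub w J :=
  ⟨0, fun _ => le_refl 0, fun _ _ => rfl, by simp⟩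

lemma coneOfSub_subset_span (w : Fin k → (Fin n → ℝ)) (J : Set (Fin k)) :
    coneOfSub w J ⊆ (Submodule.span ℝ (w '' J) : Set (Fin n → ℝ)) := by
  rintro x ⟨c, _, hc0, rfl⟩
  exact (mem_span_iff w J _).mpr ⟨c, hc0, rfl⟩

lemma affineSpan_coneOfSub (w : Fin k → (Fin n → ℝ)) (J : Set (Fin k)) :
    (affineSpan ℝ (coneOfSub w J) : Set (Fin n → ℝ)) =
      (Submodule.span ℝ (w '' J) : Set (Fin n → ℝ)) := by
  apply Set.Subset.antisymm
  · have : affineSpan ℝ (coneOfSub w J) ≤ (Submodule.span ℝ (w '' J)).toAffineSubspace :=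
      affineSpan_le.mpr (coneOfSub_subset_span w J)
    exact this
  · intro y hy
    have h0 : (0 : Fin n → ℝ) ∈ affineSpan ℝ (coneOfSub w J) :=
      subset_affineSpan ℝ _ (zero_mem_coneOfSub w J)
    have hdir : Submodule.span ℝ (w '' J) ≤ (affineSpan ℝ (coneOfSub w J)).direction := by
      rw [Submodule.span_le]
      rintro _ ⟨j, hj, rfl⟩
      have hwj : w j ∈ affineSpan ℝ (coneOfSub w J) := by
        apply subset_affineSpan
        refine ⟨Pi.single j 1, ?_, ?_, ?_⟩
        · intro i; by_cases h : i = j <;> simp [Pi.single_apply, h]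
        · intro i hi
          by_cases h : i = j
          · exact absurd (h ▸ hj) hi
          · simp [Pi.single_apply, h]
        · simp [Pi.single_apply]
      have := AffineSubspace.vsub_mem_direction hwj h0
      simpa using this
    have := AffineSubspace.vadd_mem_of_mem_direction (hdir hy) h0
    simpa using this

lemma mem_intrinsicInterior_iff {s : Set (Fin n → ℝ)} {x : Fin n → ℝ} :
    x ∈ intrinsicInterior ℝ s ↔
      x ∈ affineSpan ℝ s ∧ ∃ U : Set (Fin n → ℝ), IsOpen U ∧ x ∈ U ∧
        U ∩ (affineSpan ℝ s : Set (Fin n → ℝ)) ⊆ s := by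
  constructor
  · rintro ⟨y, hy, rfl⟩
    refine ⟨y.2, ?_⟩
    rw [mem_interior] at hy
    obtain ⟨t, hts, htopen, hyt⟩ := hy
    rw [isOpen_induced_iff] at htopen
    obtain ⟨U, hU, rfl⟩ := htopen
    refine ⟨U, hU, hyt, ?_⟩
    rintro z ⟨hzU, hzA⟩
    exact hts (show (⟨z, hzA⟩ : affineSpan ℝ s) ∈ _ from hzU)
  · rintro ⟨hx, U, hU, hxU, hsub⟩
    refine ⟨⟨x, hx⟩, ?_, rfl⟩
    rw [mem_interior]
    refine ⟨(↑) ⁻¹' U, ?_, hU.preimage continuous_subtype_val, Set.mem_preimage.mpr hxU⟩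
    rintro ⟨z, hz⟩ hzU
    exact hsub ⟨hzU, hz⟩


/-- helper to split a sum at index ℓ -/
lemma sum_split (c : Fin k → ℝ) (w : Fin k → (Fin n → ℝ)) (ℓ : Fin k) :
    ∑ i, c i • w i = (∑ i, (if i = ℓ then 0 else c i) • w i) + c ℓ • w ℓ := by
  classical
  have : ∀ i ∈ Finset.univ, c i • w i
      = (if i = ℓ then 0 else c i) • w i + (if i = ℓ then c i else 0) • w i := by
    intro i _ ; by_cases h : i = ℓ <;> simp [h]
  rw [Finset.sum_congr rfl this, Finset.sum_add_distrib]
  congr 1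
  rw [Finset.sum_eq_single ℓ]
  · simp
  · intro b _ hb; simp [hb]
  · intro h; exact absurd (Finset.mem_univ ℓ) h

/-- (a): points of the relative interior have strictly positive coefficients -/
lemma pos_coeff_of_mem_relint {w : Fin k → (Fin n → ℝ)} (hw : LinearIndependent ℝ w)
    (J : Set (Fin k)) {x : Fin n → ℝ}
    (hx : x ∈ intrinsicInterior ℝ (coneOfSub w J)) :
    ∃ c : Fin k → ℝ, (∀ i ∈ J, 0 < c i) ∧ (∀ i, i ∉ J → c i = 0) ∧ x = ∑ i, c i • w i := by
  classical
  have hxs : x ∈ coneOfSub w J := intrinsicInterior_subset hx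
  obtain ⟨c, hcnn, hc0, rfl⟩ := hxs
  obtain ⟨hxA, U, hU, hxU, hsub⟩ := mem_intrinsicInterior_iff.mp hx
  refine ⟨c, ?_, hc0, rfl⟩
  intro j hj
  -- the path t ↦ x - t • w j
  set x₀ : Fin n → ℝ := ∑ i, c i • w i with hx₀
  have hγ : Continuous fun t : ℝ => x₀ - t • w j :=
    continuous_const.sub ((continuous_id : Continuous fun t : ℝ => t).smul continuous_const)
  have hmem : (fun t : ℝ => x₀ - t • w j) ⁻¹' U ∈ nhds (0 : ℝ) := by
    apply hγ.continuousAt.preimage_mem_nhds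
    simpa using hU.mem_nhds hxU
  obtain ⟨δ, hδpos, hball⟩ := Metric.mem_nhds_iff.mp hmem
  set ε : ℝ := δ / 2 with hε
  have hεpos : 0 < ε := by positivity
  have hεU : x₀ - ε • w j ∈ U := by
    apply hball
    simp only [Metric.mem_ball, Real.dist_eq, sub_zero]
    rw [abs_of_pos hεpos]
    linarith
  have hspan : x₀ - ε • w j ∈ (affineSpan ℝ (coneOfSub w J) : Set (Fin n → ℝ)) := by
    rw [affineSpan_coneOfSub]
    have h1 : x₀ ∈ Submodule.span ℝ (w '' J) :=
      (mem_span_iff w J _).mpr ⟨c, hc0, rfl⟩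
    have h2 : w j ∈ Submodule.span ℝ (w '' J) :=
      Submodule.subset_span ⟨j, hj, rfl⟩
    exact Submodule.sub_mem _ h1 (Submodule.smul_mem _ _ h2)
  obtain ⟨d, hdnn, hd0, hdx⟩ := hsub ⟨hεU, hspan⟩
  -- coefficients of x₀ - ε • w j
  have hcoeff : (fun i => c i - if i = j then ε else 0) = d := by
    apply coeff_unique hw
    rw [← hdx]
    have : ∀ i ∈ Finset.univ, (c i - if i = j then ε else 0) • w i
        = c i • w i - (if i = j then ε else 0) • w i := fun i _ => sub_smul _ _ _
    rw [Finset.sum_congr rfl this, Finset.sum_sub_distrib]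
    congr 1
    rw [Finset.sum_eq_single j]
    · simp
    · intro b _ hb; simp [hb]
    · intro h; exact absurd (Finset.mem_univ j) h
  have : c j - ε = d j := by
    have := congrFun hcoeff j
    simpa using this
  have := hdnn j
  linarith

/-- (b): positive combinations lie in the relative interior -/
lemma mem_relint_of_pos_coeff {w : Fin k → (Fin n → ℝ)} (hw : LinearIndependent ℝ w)
    (J : Set (Fin k)) {c : Fin k → ℝ} (hpos : ∀ i ∈ J, 0 < c i) (hc0 : ∀ i, i ∉ J → c i = 0) :
    (∑ i, c i • w i) ∈ intrinsicInterior ℝ (coneOfSub w J) := by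
  classical
  obtain ⟨f, hf⟩ := exists_dual hw
  have hfsum : ∀ (i : Fin k) (d : Fin k → ℝ), f i (∑ l, d l • w l) = d i := by
    intro i d
    rw [map_sum]
    have : ∀ l ∈ Finset.univ, f i (d l • w l) = if i = l then d l else 0 := by
      intro l _
      rw [map_smul, hf i l, smul_eq_mul]
      by_cases h : i = l <;> simp [h]
    rw [Finset.sum_congr rfl this, Finset.sum_ite_eq]
    simp
  rw [mem_intrinsicInterior_iff]
  have hxA : (∑ i, c i • w i) ∈ (affineSpan ℝ (coneOfSub w J) : Set (Fin n → ℝ)) := by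
    rw [affineSpan_coneOfSub, SetLike.mem_coe]
    exact (mem_span_iff w J _).mpr ⟨c, hc0, rfl⟩
  refine ⟨hxA, ⋂ i : Fin k, {y | i ∈ J → 0 < f i y}, ?_, ?_, ?_⟩
  · apply isOpen_iInter_of_finite
    intro i
    by_cases h : i ∈ J
    · have : {y : Fin n → ℝ | i ∈ J → 0 < f i y} = (f i) ⁻¹' Set.Ioi 0 := by
        ext y; simp [h]
      rw [this]
      exact isOpen_Ioi.preimage (f i).continuous_of_finiteDimensional
    · have : {y : Fin n → ℝ | i ∈ J → 0 < f i y} = Set.univ := by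
        ext y; simp [h]
      rw [this]; exact isOpen_univ
  · refine Set.mem_iInter.mpr fun i => ?_
    simp only [Set.mem_setOf_eq]
    intro hiJ
    rw [hfsum i c]
    exact hpos i hiJ
  · rintro y ⟨hyU, hyA⟩
    rw [affineSpan_coneOfSub, SetLike.mem_coe] at hyA
    obtain ⟨d, hd0, rfl⟩ := (mem_span_iff w J _).mp hyA
    refine ⟨d, fun i => ?_, hd0, rfl⟩
    by_cases h : i ∈ J
    · have h2 := Set.mem_iInter.mp hyU i
      simp only [Set.mem_setOf_eq] at h2
      have := h2 h
      rw [hfsum i d] at this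
      exact le_of_lt this
    · simp [hd0 i h]


open Matrix in
lemma exists_int_relation {n s : ℕ} (v : Fin s → Fin n → ℤ)
    (hli : LinearIndependent ℝ fun i => intToR (v i)) (m : Fin n → ℤ) (c : Fin s → ℝ)
    (hm : intToR m = ∑ i, c i • intToR (v i)) :
    ∃ (q : ℤ) (p : Fin s → ℤ), 0 < q ∧ ∀ i, (q : ℝ) * c i = (p i : ℝ) := by
  classical
  set M : Matrix (Fin s) (Fin n) ℤ := Matrix.of fun i t => v i t with hM
  set G : Matrix (Fin s) (Fin s) ℤ := M * Mᵀ with hG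
  set MR : Matrix (Fin s) (Fin n) ℝ := M.map (Int.cast) with hMR
  set GR : Matrix (Fin s) (Fin s) ℝ := G.map (Int.cast) with hGR
  have hGRmul : GR = MR * MRᵀ := by
    ext i j
    simp only [hGR, hG, hMR, hM, Matrix.map_apply, Matrix.mul_apply, Matrix.transpose_apply,
      Matrix.of_apply]
    push_cast
    rfl
  -- injectivity of GR.mulVec
  have hker : ∀ d : Fin s → ℝ, GR *ᵥ d = 0 → d = 0 := by
    intro d hd
    have h1 : MRᵀ *ᵥ d = 0 := by
      have h2 : (MRᵀ *ᵥ d) ⬝ᵥ (MRᵀ *ᵥ d) = 0 := by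
        have : d ⬝ᵥ (GR *ᵥ d) = (MRᵀ *ᵥ d) ⬝ᵥ (MRᵀ *ᵥ d) := by
          rw [hGRmul, ← Matrix.mulVec_mulVec, Matrix.dotProduct_mulVec]
          congr 1
          rw [← Matrix.transpose_transpose MR, Matrix.vecMul_transpose,
            Matrix.transpose_transpose]
        rw [← this, hd, dotProduct_zero]
      exact dotProduct_self_eq_zero.mp h2
    have h3 : ∑ i, d i • intToR (v i) = 0 := by
      funext t
      have := congrFun h1 t
      simp only [Matrix.mulVec, dotProduct, Matrix.transpose_apply, Pi.zero_apply] at this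
      simpa [Finset.sum_apply, intToR, hMR, hM, mul_comm] using this
    funext i
    exact Fintype.linearIndependent_iff.mp hli d h3 i
  have hinj : Function.Injective GR.mulVec := by
    intro d e h
    have : GR *ᵥ (d - e) = 0 := by
      rw [Matrix.mulVec_sub, h, sub_self]
    have := hker _ this
    exact sub_eq_zero.mp this
  have hunit : IsUnit GR := Matrix.mulVec_injective_iff_isUnit.mp hinj
  have hdetR : GR.det ≠ 0 := by
    intro h
    exact (Matrix.isUnit_iff_isUnit_det GR).mp hunit |>.ne_zero (by rw [h])
  have hdetcast : GR.det = (G.det : ℝ) := by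
    rw [hGR]
    have : G.map (Int.cast : ℤ → ℝ) = (Int.castRingHom ℝ).mapMatrix G := rfl
    rw [this, ← RingHom.map_det]
    simp
  have hdet : G.det ≠ 0 := by
    intro h
    apply hdetR
    rw [hdetcast, h, Int.cast_zero]
  -- the right-hand side vector
  set b : Fin s → ℤ := fun j => ∑ t, v j t * m t with hb
  have hGc : GR *ᵥ c = fun j => (b j : ℝ) := by
    funext j
    have hmt : ∀ t, (m t : ℝ) = ∑ i, c i * (v i t : ℝ) := by
      intro t
      have := congrFun hm t
      simpa [intToR, Finset.sum_apply] using this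
    simp only [Matrix.mulVec, dotProduct, hGR, hG, hM, Matrix.map_apply,
      Matrix.mul_apply, Matrix.transpose_apply, Matrix.of_apply, hb]
    push_cast
    calc ∑ i, (∑ t, (v j t : ℝ) * (v i t : ℝ)) * c i
        = ∑ i, ∑ t, (v j t : ℝ) * (v i t : ℝ) * c i := by
          refine Finset.sum_congr rfl fun i _ => ?_
          rw [Finset.sum_mul]
      _ = ∑ t, ∑ i, (v j t : ℝ) * (v i t : ℝ) * c i := Finset.sum_comm
      _ = ∑ t, (v j t : ℝ) * (m t : ℝ) := by
          refine Finset.sum_congr rfl fun t _ => ?_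
          rw [hmt t, Finset.mul_sum]
          refine Finset.sum_congr rfl fun i _ => ?_
          ring
  -- Cramer
  set N : Fin s → ℤ := G.adjugate *ᵥ b with hN
  have hadj : GR.adjugate = (G.adjugate).map (Int.cast : ℤ → ℝ) := by
    rw [hGR]
    have h1 : G.map (Int.cast : ℤ → ℝ) = (Int.castRingHom ℝ).mapMatrix G := rfl
    have h2 : G.adjugate.map (Int.cast : ℤ → ℝ) = (Int.castRingHom ℝ).mapMatrix G.adjugate := rfl
    rw [h1, h2, RingHom.map_adjugate]
  have hkey : ∀ i, (G.det : ℝ) * c i = (N i : ℝ) := by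
    have h1 : GR.adjugate *ᵥ (GR *ᵥ c) = GR.det • c := by
      rw [Matrix.mulVec_mulVec, Matrix.adjugate_mul, Matrix.smul_mulVec,
        Matrix.one_mulVec]
    have h2 : GR.adjugate *ᵥ (fun j => (b j : ℝ)) = fun i => (N i : ℝ) := by
      funext i
      simp only [Matrix.mulVec, dotProduct, hadj, Matrix.map_apply, hN]
      push_cast
      rfl
    intro i
    have h3 := h1
    rw [hGc, h2] at h3
    have := congrFun h3 i
    simp only [Pi.smul_apply, smul_eq_mul, hdetcast] at this
    exact this.symm
  refine ⟨G.det * G.det, fun i => G.det * N i, mul_self_pos.mpr hdet, fun i => ?_⟩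
  simp only [Int.cast_mul]
  rw [mul_assoc, hkey i]


/-- If `v_ℓ ∈ W` and the opposite facet `σ^ℓ = Cone(vᵢ : i ≠ ℓ)` satisfies the (†)
implication for `W`, then so does `σ = Cone(v₁,…,v_s)`. -/
theorem dagger_of_facet (n s : ℕ) (v : Fin s → Fin n → ℤ)
    (hli : LinearIndependent ℝ fun i => intToR (v i))
    (W : Submodule ℂ (Fin n → ℂ)) (ℓ : Fin s) (hℓ : intToC (v ℓ) ∈ W)
    (hface : relintMeetsLattice (coneOfSub (fun i => intToR (v i)) {ℓ}ᶜ) W →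
      subsetW (coneOfSub (fun i => intToR (v i)) {ℓ}ᶜ) W) :
    relintMeetsLattice (coneOf fun i => intToR (v i)) W →
      subsetW (coneOf fun i => intToR (v i)) W := by
  intro hrel
  set w : Fin s → Fin n → ℝ := fun i => intToR (v i) with hwdef
  have hcone : coneOf w = coneOfSub w Set.univ := by
    ext x
    constructor
    · rintro ⟨c, hc, rfl⟩
      exact ⟨c, hc, fun i hi => absurd (Set.mem_univ i) hi, rfl⟩
    · rintro ⟨c, hc, _, rfl⟩
      exact ⟨c, hc, rfl⟩
  obtain ⟨m, hmint, hmW⟩ := hrel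
  rw [hcone] at hmint
  obtain ⟨c, hcpos, -, hmsum⟩ := pos_coeff_of_mem_relint hli Set.univ hmint
  obtain ⟨q, p, hq, hqc⟩ := exists_int_relation v hli m c hmsum
  classical
  set m' : Fin n → ℤ := fun t => q * m t - p ℓ * v ℓ t with hm'
  set d : Fin s → ℝ := fun i => if i = ℓ then 0 else (q : ℝ) * c i with hd
  have hdsum : intToR m' = ∑ i, d i • w i := by
    funext t
    have hmt : (m t : ℝ) = ∑ i, c i * w i t := by
      have := congrFun hmsum t
      simpa [intToR, Finset.sum_apply] using this
    have hRHS : (∑ i, d i • w i) t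
        = (∑ i, ((q : ℝ) * c i) * w i t) - ((q : ℝ) * c ℓ) * w ℓ t := by
      rw [Finset.sum_apply]
      have : ∀ i ∈ Finset.univ, (d i • w i) t
          = ((q : ℝ) * c i) * w i t - (if i = ℓ then ((q : ℝ) * c ℓ) * w ℓ t else 0) := by
        intro i _
        by_cases h : i = ℓ <;> simp [hd, h]
      rw [Finset.sum_congr rfl this, Finset.sum_sub_distrib]
      congr 1
      rw [Finset.sum_eq_single ℓ]
      · simp
      · intro b _ hb; simp [hb]
      · intro h; exact absurd (Finset.mem_univ ℓ) h
    rw [hRHS]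
    have hLHS : intToR m' t = (q : ℝ) * (m t : ℝ) - (p ℓ : ℝ) * ((v ℓ t : ℤ) : ℝ) := by
      simp only [intToR, hm']
      push_cast
      ring
    rw [hLHS, hmt, ← hqc ℓ, Finset.mul_sum]
    have hwlt : w ℓ t = ((v ℓ t : ℤ) : ℝ) := rfl
    rw [hwlt]
    congr 1
    refine Finset.sum_congr rfl fun i _ => ?_
    ring
  have hdpos : ∀ i ∈ ({ℓ}ᶜ : Set (Fin s)), 0 < d i := by
    intro i hi
    have hne : i ≠ ℓ := hi
    have : d i = (q : ℝ) * c i := by simp [hd, hne]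
    rw [this]
    exact mul_pos (by exact_mod_cast hq) (hcpos i (Set.mem_univ i))
  have hd0 : ∀ i, i ∉ ({ℓ}ᶜ : Set (Fin s)) → d i = 0 := by
    intro i hi
    have : i = ℓ := by simpa using hi
    simp [hd, this]
  have hrel' : relintMeetsLattice (coneOfSub w {ℓ}ᶜ) W := by
    refine ⟨m', ?_, ?_⟩
    · rw [hdsum]
      exact mem_relint_of_pos_coeff hli _ hdpos hd0
    · have : intToC m' = (q : ℂ) • intToC m - (p ℓ : ℂ) • intToC (v ℓ) := by
        funext t
        simp only [intToC, hm', Pi.sub_apply, Pi.smul_apply, smul_eq_mul]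
        push_cast
        ring
      rw [this]
      exact Submodule.sub_mem _ (Submodule.smul_mem _ _ hmW) (Submodule.smul_mem _ _ hℓ)
  have hsub := hface hrel'
  intro x hx
  obtain ⟨e, he, rfl⟩ := hx
  have hy : (∑ i, (if i = ℓ then 0 else e i) • w i) ∈ coneOfSub w ({ℓ}ᶜ : Set (Fin s)) := by
    refine ⟨_, fun i => ?_, fun i hi => ?_, rfl⟩
    · by_cases h : i = ℓ <;> simp [h, he i]
    · have : i = ℓ := by simpa using hi
      simp [this]
  have hsplit := sum_split e w ℓ
  have htoC : toC (∑ i, e i • w i)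
      = toC (∑ i, (if i = ℓ then 0 else e i) • w i) + (e ℓ : ℂ) • intToC (v ℓ) := by
    funext t
    rw [hsplit]
    simp only [toC, intToC, intToR, hwdef, Pi.add_apply, Pi.smul_apply, smul_eq_mul,
      Finset.sum_apply]
    push_cast
    ring
  rw [htoC]
  exact Submodule.add_mem _ (hsub _ hy) (Submodule.smul_mem _ _ hℓ)
end
end

section
/- Fix n ∈ ℕ, an integer 1 ≤ s ≤ n, and complex numbers a₁, …, a_n ∈ ℂ. Let W := {z ∈ ℂⁿ : ∑_{j=1}^{n} aⱼ·zⱼ = 0}, and for each subset J ⊆ {1, …, s} let τ_J := Cone(eⱼ : j ∈ J), where e₁, …, e_n is the standard basis of ℝⁿ. Then the following are equivalent: (i) for every J ⊆ {1, …, s}, Relint(τ_J) ∩ W ∩ ℤⁿ ≠ ∅ if and only if τ_J ⊆ W; (ii) for all nonnegative integers n₁, …, n_s with ∑_{j=1}^{s} nⱼ·aⱼ = 0, one has aⱼ = 0 for every j with nⱼ ≠ 0 (i.e. the tuple of nonzero aⱼ with j ≤ s satisfies the non-resonant condition). -/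
open scoped BigOperators

noncomputable section

section Aux

variable {n : ℕ}

lemma mem_coneE (J : Set (Fin n)) (x : Fin n → ℝ) :
    x ∈ coneOfSub (fun j : Fin n => (Pi.single j 1 : Fin n → ℝ)) J ↔
      (∀ i, 0 ≤ x i) ∧ ∀ i, i ∉ J → x i = 0 := by
  have key : ∀ c : Fin n → ℝ, ∑ i, c i • (Pi.single i 1 : Fin n → ℝ) = c := by
    intro c
    ext j
    simp [Finset.sum_apply, Pi.single_apply]
  constructor
  · rintro ⟨c, hc0, hcJ, rfl⟩
    rw [key]
    exact ⟨hc0, hcJ⟩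
  · rintro ⟨h0, hJ⟩
    exact ⟨x, h0, hJ, (key x).symm⟩

lemma single_mem_coneE {J : Set (Fin n)} {j : Fin n} (hj : j ∈ J) :
    (Pi.single j 1 : Fin n → ℝ) ∈
      coneOfSub (fun j : Fin n => (Pi.single j 1 : Fin n → ℝ)) J := by
  rw [mem_coneE]
  constructor
  · intro i
    rcases eq_or_ne i j with rfl | hij
    · simp
    · simp [Pi.single_apply, hij]
  · intro i hi
    exact Pi.single_eq_of_ne (fun h => hi (by rw [h]; exact hj)) 1

def auxV (J : Set (Fin n)) : Submodule ℝ (Fin n → ℝ) where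
  carrier := {x | ∀ i, i ∉ J → x i = 0}
  add_mem' := by intro x y hx hy i hi; simp only [Pi.add_apply, hx i hi, hy i hi, add_zero]
  zero_mem' := by intro i _; rfl
  smul_mem' := by intro c x hx i hi; simp only [Pi.smul_apply, hx i hi, smul_zero]

lemma coneE_span_le (J : Set (Fin n)) :
    ∀ x ∈ affineSpan ℝ (coneOfSub (fun j : Fin n => (Pi.single j 1 : Fin n → ℝ)) J),
      ∀ i, i ∉ J → x i = 0 := by
  intro x hx
  have h : affineSpan ℝ (coneOfSub (fun j : Fin n => (Pi.single j 1 : Fin n → ℝ)) J)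
      ≤ (auxV J).toAffineSubspace := by
    rw [affineSpan_le]
    intro y hy
    exact ((mem_coneE J y).mp hy).2
  exact h hx

lemma mem_relint_iff (J : Set (Fin n)) (x : Fin n → ℝ) :
    x ∈ intrinsicInterior ℝ (coneOfSub (fun j : Fin n => (Pi.single j 1 : Fin n → ℝ)) J) ↔
      (∀ j ∈ J, 0 < x j) ∧ ∀ i, i ∉ J → x i = 0 := by
  classical
  set τ := coneOfSub (fun j : Fin n => (Pi.single j 1 : Fin n → ℝ)) J with hτdef
  constructor
  · intro hx
    have hxτ : x ∈ τ := intrinsicInterior_subset hx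
    obtain ⟨h0, hz⟩ := (mem_coneE J x).mp hxτ
    refine ⟨?_, hz⟩
    intro j hj
    rcases lt_or_eq_of_le (h0 j) with h | h
    · exact h
    exfalso
    obtain ⟨y, hy, hyx⟩ := mem_intrinsicInterior.mp hx
    rw [mem_interior_iff_mem_nhds, Metric.mem_nhds_iff] at hy
    obtain ⟨ε, hε, hball⟩ := hy
    have hej : (Pi.single j 1 : Fin n → ℝ) ∈ τ := single_mem_coneE hj
    have h0τ : (0 : Fin n → ℝ) ∈ τ := by
      rw [hτdef, mem_coneE]
      exact ⟨fun _ => le_refl 0, fun _ _ => rfl⟩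
    have hdir : (Pi.single j 1 : Fin n → ℝ) ∈ (affineSpan ℝ τ).direction := by
      have := AffineSubspace.vsub_mem_direction (subset_affineSpan ℝ τ hej)
        (subset_affineSpan ℝ τ h0τ)
      simpa using this
    have hxspan : x ∈ affineSpan ℝ τ := subset_affineSpan ℝ τ hxτ
    have hw : (-(ε/2)) • (Pi.single j 1 : Fin n → ℝ) + x ∈ affineSpan ℝ τ := by
      have := AffineSubspace.vadd_mem_of_mem_direction
        (Submodule.smul_mem _ (-(ε/2)) hdir) hxspan
      simpa using this
    set w : Fin n → ℝ := (-(ε/2)) • (Pi.single j 1 : Fin n → ℝ) + x with hwdef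
    have hdist : dist (⟨w, hw⟩ : affineSpan ℝ τ) y < ε := by
      rw [Subtype.dist_eq, hyx, dist_pi_lt_iff hε]
      intro i
      have hwi : w i - x i = (-(ε/2)) * ((Pi.single j 1 : Fin n → ℝ) i) := by
        simp [hwdef]
      rw [Real.dist_eq, hwi]
      rcases eq_or_ne i j with rfl | hij
      · simp only [Pi.single_eq_same, mul_one, abs_neg]
        rw [abs_of_nonneg (by linarith : (0:ℝ) ≤ ε/2)]
        linarith
      · rw [Pi.single_eq_of_ne hij, mul_zero, abs_zero]
        exact hε
    have hwτ : w ∈ τ := hball (Metric.mem_ball.mpr hdist)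
    have hwj := ((mem_coneE J w).mp hwτ).1 j
    have : w j = -(ε/2) + x j := by simp [hwdef]
    rw [this, ← h] at hwj
    linarith
  · rintro ⟨hpos, hz⟩
    have hxτ : x ∈ τ := by
      rw [hτdef, mem_coneE]
      refine ⟨fun i => ?_, hz⟩
      by_cases h : i ∈ J
      · exact (hpos i h).le
      · rw [hz i h]
    rw [mem_intrinsicInterior]
    refine ⟨⟨x, subset_affineSpan ℝ τ hxτ⟩, ?_, rfl⟩
    rw [mem_interior_iff_mem_nhds, Metric.mem_nhds_iff]
    set F : Finset ℝ := insert 1 ((Finset.univ.filter (fun j => j ∈ J)).image x) with hF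
    have hFne : F.Nonempty := ⟨1, Finset.mem_insert_self _ _⟩
    set ε := F.min' hFne with hε
    have hεpos : 0 < ε := by
      have hmem : ε ∈ F := F.min'_mem hFne
      rcases Finset.mem_insert.mp hmem with h | h
      · rw [h]; norm_num
      · obtain ⟨j, hjmem, hjx⟩ := Finset.mem_image.mp h
        have hjJ : j ∈ J := (Finset.mem_filter.mp hjmem).2
        rw [← hjx]; exact hpos j hjJ
    have hεle : ∀ j ∈ J, ε ≤ x j := by
      intro j hj
      exact F.min'_le _ (Finset.mem_insert_of_mem
        (Finset.mem_image_of_mem x (Finset.mem_filter.mpr ⟨Finset.mem_univ j, hj⟩)))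
    refine ⟨ε, hεpos, ?_⟩
    rintro ⟨z, hzspan⟩ hzball
    have hd : dist z x < ε := by
      have := Metric.mem_ball.mp hzball
      rwa [Subtype.dist_eq] at this
    have hco := (dist_pi_lt_iff hεpos).mp hd
    have hzJ : ∀ i, i ∉ J → z i = 0 := coneE_span_le J z hzspan
    show z ∈ τ
    rw [hτdef, mem_coneE]
    refine ⟨fun i => ?_, hzJ⟩
    by_cases hi : i ∈ J
    · have h1 := hco i
      rw [Real.dist_eq, abs_lt] at h1
      have := hεle i hi
      linarith
    · rw [hzJ i hi]

lemma subsetW_iff (a : Fin n → ℂ) (W : Submodule ℂ (Fin n → ℂ))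
    (hW : ∀ z : Fin n → ℂ, z ∈ W ↔ ∑ j, a j * z j = 0) (J : Set (Fin n)) :
    subsetW (coneOfSub (fun j : Fin n => (Pi.single j 1 : Fin n → ℝ)) J) W ↔
      ∀ j ∈ J, a j = 0 := by
  constructor
  · intro h j hj
    have hmem := h _ (single_mem_coneE hj)
    rw [hW] at hmem
    have hsum : ∑ i, a i * toC (Pi.single j 1 : Fin n → ℝ) i = a j := by
      rw [Finset.sum_eq_single j]
      · simp [toC]
      · intro i _ hij
        simp [toC, Pi.single_eq_of_ne hij]
      · intro h'; exact absurd (Finset.mem_univ j) h'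
    rw [hsum] at hmem
    exact hmem
  · intro ha x hx
    rw [hW]
    obtain ⟨h0, hz⟩ := (mem_coneE J x).mp hx
    refine Finset.sum_eq_zero fun i _ => ?_
    by_cases hi : i ∈ J
    · rw [ha i hi, zero_mul]
    · simp [toC, hz i hi]

end Aux

/-- For the hyperplane `W = {z : ∑ aⱼ zⱼ = 0} ⊆ ℂⁿ` and the cones `τ_J = Cone(eⱼ : j ∈ J)`
over subsets `J ⊆ {1,…,s}` of standard basis vectors, condition (†) for all such `τ_J`
is equivalent to the non-resonant condition on the nonzero `aⱼ` with `j ≤ s`. -/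
theorem dagger_iff_nonresonant (n s : ℕ) (hs1 : 1 ≤ s) (hsn : s ≤ n)
    (a : Fin n → ℂ) (W : Submodule ℂ (Fin n → ℂ))
    (hW : ∀ z : Fin n → ℂ, z ∈ W ↔ ∑ j, a j * z j = 0) :
    (∀ J : Set (Fin n), (∀ j ∈ J, (j : ℕ) < s) →
        (relintMeetsLattice
            (coneOfSub (fun j : Fin n => (Pi.single j 1 : Fin n → ℝ)) J) W ↔
          subsetW (coneOfSub (fun j : Fin n => (Pi.single j 1 : Fin n → ℝ)) J) W)) ↔
      (∀ N : Fin n → ℕ,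
        (∑ j ∈ Finset.univ.filter fun j : Fin n => (j : ℕ) < s, (N j : ℂ) * a j) = 0 →
        ∀ j : Fin n, (j : ℕ) < s → N j ≠ 0 → a j = 0) := by
  classical
  constructor
  · intro H N hN j0 hj0 hN0
    set J : Set (Fin n) := {j | (j : ℕ) < s ∧ N j ≠ 0} with hJdef
    have hJ : ∀ j ∈ J, (j : ℕ) < s := fun j hj => hj.1
    set m : Fin n → ℤ := fun j => if (j : ℕ) < s then (N j : ℤ) else 0 with hmdef
    have hrel : intToR m ∈ intrinsicInterior ℝ
        (coneOfSub (fun j : Fin n => (Pi.single j 1 : Fin n → ℝ)) J) := by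
      rw [mem_relint_iff]
      constructor
      · intro j hj
        have hmj : m j = (N j : ℤ) := if_pos hj.1
        show (0:ℝ) < ((m j : ℤ) : ℝ)
        rw [hmj]
        exact_mod_cast Nat.pos_of_ne_zero hj.2
      · intro i hi
        have hmi : m i = 0 := by
          by_cases h : (i : ℕ) < s
          · have hNi : N i = 0 := by
              by_contra hne
              exact hi ⟨h, hne⟩
            simp [hmdef, h, hNi]
          · simp [hmdef, h]
        show ((m i : ℤ) : ℝ) = 0
        rw [hmi]
        exact Int.cast_zero
    have hWm : intToC m ∈ W := by
      rw [hW]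
      have hterm : ∀ j : Fin n,
          a j * intToC m j = if (j : ℕ) < s then (N j : ℂ) * a j else 0 := by
        intro j
        by_cases h : (j : ℕ) < s
        · show a j * ((m j : ℤ) : ℂ) = _
          rw [if_pos h, hmdef]
          simp [h, mul_comm]
        · show a j * ((m j : ℤ) : ℂ) = _
          rw [if_neg h, hmdef]
          simp [h]
      rw [Finset.sum_congr rfl (fun j _ => hterm j), ← Finset.sum_filter]
      exact hN
    have hsub := (H J hJ).mp ⟨m, hrel, hWm⟩
    exact (subsetW_iff a W hW J).mp hsub j0 ⟨hj0, hN0⟩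
  · intro H J hJ
    constructor
    · rintro ⟨m, hint, hmW⟩
      obtain ⟨hpos, hz⟩ := (mem_relint_iff J _).mp hint
      have hposZ : ∀ j ∈ J, 0 < m j := by
        intro j hj
        have h2 : (0:ℝ) < ((m j : ℤ) : ℝ) := hpos j hj
        exact_mod_cast h2
      have hzZ : ∀ i, i ∉ J → m i = 0 := by
        intro i hi
        have h2 : ((m i : ℤ) : ℝ) = 0 := hz i hi
        exact_mod_cast h2
      set N : Fin n → ℕ := fun j => (m j).toNat with hNdef
      have hsum : (∑ j ∈ Finset.univ.filter fun j : Fin n => (j : ℕ) < s,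
          (N j : ℂ) * a j) = 0 := by
        have h1 : ∀ j ∈ Finset.univ.filter (fun j : Fin n => (j : ℕ) < s),
            (N j : ℂ) * a j = a j * ((m j : ℤ) : ℂ) := by
          intro j _
          by_cases hJm : j ∈ J
          · have ht : ((m j).toNat : ℤ) = m j := Int.toNat_of_nonneg (hposZ j hJm).le
            have hc : ((N j : ℕ) : ℂ) = ((m j : ℤ) : ℂ) := by
              rw [hNdef]
              exact_mod_cast congrArg (fun t : ℤ => (t : ℂ)) ht
            rw [hc, mul_comm]
          · rw [hzZ j hJm]
            simp [hNdef, hzZ j hJm]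
        rw [Finset.sum_congr rfl h1,
          Finset.sum_subset (Finset.subset_univ _) (by
            intro j _ hjf
            have hjs : ¬ (j : ℕ) < s := by simpa using hjf
            have hjJ : j ∉ J := fun hjJ => hjs (hJ j hjJ)
            rw [hzZ j hjJ]
            simp)]
        rw [hW] at hmW
        exact hmW
      have hA := H N hsum
      rw [subsetW_iff a W hW J]
      intro j hj
      refine hA j (hJ j hj) ?_
      have hp := hposZ j hj
      simp only [hNdef]
      omega
    · intro hsub
      have ha := (subsetW_iff a W hW J).mp hsub
      refine ⟨fun j => if j ∈ J then 1 else 0, ?_, ?_⟩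
      · rw [mem_relint_iff]
        constructor
        · intro j hj
          show (0:ℝ) < (((if j ∈ J then 1 else 0 : ℤ)) : ℝ)
          simp [hj]
        · intro i hi
          show (((if i ∈ J then 1 else 0 : ℤ)) : ℝ) = 0
          simp [hi]
      · rw [hW]
        refine Finset.sum_eq_zero fun i _ => ?_
        by_cases hi : i ∈ J
        · rw [ha i hi, zero_mul]
        · show a i * ((if i ∈ J then 1 else 0 : ℤ) : ℂ) = 0
          simp [hi]
end
end
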